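/- arXiv:1009.5304 — 2 statements merged into one kernel-verified Lean document; each statement's English description precedes it below -/
import Mathlib

section
/- Fix n ≥ 1, a nondecreasing weight vector d : Fin n → ℕ with d j ≥ 1 for all j, weighted homogeneous polynomials a_j^l of degree d l − d j for each pair with d l > d j, and the associated triangular frame X_j(x) = e_j + Σ_{l : d l > d j} a_j^l(x) e_l on ℝⁿ. Let q ≥ 1 be an integer and let ρ be a metric on ℝⁿ that induces the Euclidean topology and satisfies ρ(0, δ_r x) = r·ρ(0,x) for all r > 0 and x ∈ ℝⁿ. Let γ : ℝ → ℝⁿ be continuously differentiable with γ(0) = 0 and γ'(0) ≠ 0, and suppose there exist continuous λ_j with γ'(t) = Σ_j λ_j(t) X_j(γ(t)) for t ∈ (−1,1), λ_j ≡ 0 whenever d j > q, and λ_j(0) = 0 whenever d j = q. Then r^{−q} · ∫_{{t ∈ (−1,1) : ρ(0, γ(t)) ≤ r}} ‖γ'(t)‖ dt tends to +∞ as r → 0⁺, where ‖·‖ is the Euclidean norm. -/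
open MvPolynomial Filter Asymptotics Topology MeasureTheory Set

/-! Integrating the equation `γ' = ∑ λ_k X_k(γ)` coordinatewise, induction on the weight `d j`
gives `γ_j(t) = o(t^{d_j/q})` as `t → 0⁺`: by the degree hypotheses `λ_k(t) = o(t^{d_k/q - 1})`,
and by the induction hypothesis the weighted homogeneous `a_k^j(γ(t))` is `o(t^{(d_j - d_k)/q})`.
Homogeneity of `ρ` then gives `ρ(0, γ(t)) = t^{1/q} ρ(0, δ_{t^{-1/q}} γ(t)) = o(t^{1/q})`, so for
every `ε > 0` and small `r` the ball of radius `r` contains `γ((0, (r/ε)^q])`, along which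
`|γ'| ≥ |γ'(0)|/2`; the arclength in the ball is thus at least `|γ'(0)| (r/ε)^q / 2`. -/

/-- The triangular frame `X j (x) = e_j + ∑_{l : d l > d j} a_j^l(x) e_l` associated with a
weight vector `d` and coefficient polynomials `a j l`; this is the coordinate expression of a
left-invariant frame generated by a graded basis of a graded group. -/
noncomputable def gradedFrame (n : ℕ) (d : Fin n → ℕ)
    (a : Fin n → Fin n → MvPolynomial (Fin n) ℝ) (j : Fin n) (x : Fin n → ℝ) : Fin n → ℝ :=
  fun l => (if l = j then (1 : ℝ) else 0) +
    if d j < d l then MvPolynomial.eval x (a j l) else 0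

theorem Asymptotics.isLittleO_prod_pow_weight {σ 𝕜 α : Type*} [Fintype σ] [NormedField 𝕜]
    {w : σ → ℕ} {β : σ →₀ ℕ} (hβ : β ≠ 0) {l : Filter α} {x : α → σ → 𝕜} {u : α → 𝕜}
    (hx : ∀ i, w i ≤ Finsupp.weight w β → (fun a => x a i) =o[l] fun a => u a ^ w i) :
    (fun a => ∏ i, x a i ^ β i) =o[l] fun a => u a ^ Finsupp.weight w β := by
  have hle : ∀ i, β i ≠ 0 → w i ≤ Finsupp.weight w β := fun i hi => by
    rw [Finsupp.weight_eq_sum]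
    calc w i ≤ β i • w i := Nat.le_mul_of_pos_left _ (Nat.pos_of_ne_zero hi)
      _ ≤ ∑ j, β j • w j :=
        Finset.single_le_sum (f := fun j => β j • w j) (fun j _ => Nat.zero_le _)
          (Finset.mem_univ i)
  have hpow : (fun a => u a ^ Finsupp.weight w β) = fun a => ∏ i, (u a ^ w i) ^ β i := by
    simp only [Finsupp.weight_eq_sum, smul_eq_mul, ← pow_mul, Finset.prod_pow_eq_pow_sum,
      mul_comm]
  rw [hpow]
  obtain ⟨i₀, hi₀⟩ := Finsupp.ne_iff.mp hβ
  refine IsLittleO.finsetProd (fun i _ => ?_)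
    ⟨i₀, Finset.mem_univ _, (hx i₀ (hle i₀ hi₀)).pow (Nat.pos_of_ne_zero hi₀)⟩
  by_cases hi : β i = 0
  · simpa only [hi, pow_zero] using isBigO_refl _ _
  · exact ((hx i (hle i hi)).pow (Nat.pos_of_ne_zero hi)).isBigO

theorem MvPolynomial.IsWeightedHomogeneous.isLittleO_eval {σ 𝕜 α : Type*} [Fintype σ]
    [NormedField 𝕜] {w : σ → ℕ} {m : ℕ} {p : MvPolynomial σ 𝕜}
    (hp : p.IsWeightedHomogeneous w m) (hm : m ≠ 0) {l : Filter α} {x : α → σ → 𝕜}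
    {u : α → 𝕜} (hx : ∀ i, w i ≤ m → (fun a => x a i) =o[l] fun a => u a ^ w i) :
    (fun a => eval (x a) p) =o[l] fun a => u a ^ m := by
  simp only [eval_eq']
  refine IsLittleO.fun_sum fun β hβ => ?_
  have hβm : Finsupp.weight w β = m := hp (mem_support_iff.mp hβ)
  have hβ0 : β ≠ 0 := by rintro rfl; exact hm (by simpa using hβm.symm)
  subst hβm
  exact (isLittleO_prod_pow_weight hβ0 hx).const_mul_left _

theorem isLittleO_rpow_add_one_of_hasDerivAt {E : Type*} [NormedAddCommGroup E]
    [NormedSpace ℝ E] [CompleteSpace E] {f f' : ℝ → E} {β : ℝ} (hβ : -1 < β)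
    (hf : ∀ t, HasDerivAt f (f' t) t) (hf' : Continuous f') (hf0 : f 0 = 0)
    (h : f' =o[𝓝[>] 0] fun t => t ^ β) : f =o[𝓝[>] 0] fun t => t ^ (β + 1) := by
  refine IsLittleO.of_bound fun c hc => ?_
  have hβ1 : 0 < β + 1 := by linarith
  obtain ⟨δ, hδ, hbound⟩ :=
    mem_nhdsGT_iff_exists_Ioo_subset.mp (h.def (mul_pos hc hβ1))
  filter_upwards [Ioo_mem_nhdsGT hδ] with t ⟨ht, htδ⟩
  have hFTC : f t = ∫ s in (0 : ℝ)..t, f' s := by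
    rw [intervalIntegral.integral_eq_sub_of_hasDerivAt (fun s _ => hf s)
      (hf'.intervalIntegrable _ _), hf0, sub_zero]
  calc ‖f t‖ ≤ ∫ s in (0 : ℝ)..t, c * (β + 1) * s ^ β := by
        rw [hFTC]
        refine intervalIntegral.norm_integral_le_of_norm_le ht.le
          (ae_of_all _ fun s hs => ?_)
          ((intervalIntegral.intervalIntegrable_rpow' hβ).const_mul _)
        have : ‖f' s‖ ≤ c * (β + 1) * ‖s ^ β‖ := hbound ⟨hs.1, hs.2.trans_lt htδ⟩
        rwa [Real.norm_of_nonneg (Real.rpow_nonneg hs.1.le _)] at this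
    _ = c * ‖t ^ (β + 1)‖ := by
        rw [intervalIntegral.integral_const_mul, integral_rpow (Or.inl hβ),
          Real.zero_rpow hβ1.ne', Real.norm_of_nonneg (Real.rpow_nonneg ht.le _)]
        field_simp
        ring

theorem isLittleO_rpow_of_tendsto {f : ℝ → ℝ} {y e : ℝ} (hf : Tendsto f (𝓝[>] 0) (𝓝 y))
    (hpos : 0 < e → f =ᶠ[𝓝[>] 0] 0) (hzero : e = 0 → y = 0) :
    f =o[𝓝[>] 0] fun t => t ^ e := by
  rcases lt_trichotomy e 0 with he | rfl | he
  · exact (hf.isBigO_one ℝ).trans_isLittleO <| (isLittleO_one_left_iff ℝ).2 <|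
      tendsto_norm_atTop_atTop.comp (tendsto_rpow_neg_nhdsGT_zero he)
  · simp only [Real.rpow_zero]
    exact (isLittleO_one_iff ℝ).2 (hzero rfl ▸ hf)
  · exact (isLittleO_zero _ _).congr' (hpos he).symm EventuallyEq.rfl

theorem eventually_lt_mul_of_isLittleO_pow {ι α : Type*} {N : (ι → ℝ) → ℝ} {d : ι → ℕ}
    (hN : ∀ ε > 0, ∀ᶠ y in 𝓝 0, N y < ε)
    (hNhom : ∀ r : ℝ, 0 < r → ∀ x, N (fun j => r ^ d j * x j) = r * N x)
    {l : Filter α} {x : α → ι → ℝ} {u : α → ℝ} (hu : ∀ᶠ a in l, 0 < u a)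
    (hx : ∀ j, (fun a => x a j) =o[l] fun a => u a ^ d j) :
    ∀ ε > 0, ∀ᶠ a in l, N (x a) < ε * u a := by
  intro ε hε
  have hy : Tendsto (fun a j => x a j / u a ^ d j) l (𝓝 0) :=
    tendsto_pi_nhds.2 fun j => (hx j).tendsto_div_nhds_zero
  filter_upwards [hy.eventually (hN ε hε), hu] with a hNy hua
  have hxa : x a = fun j => u a ^ d j * (x a j / u a ^ d j) := by
    funext j
    rw [mul_div_cancel₀ _ (pow_ne_zero _ hua.ne')]
  rw [hxa, hNhom _ hua, mul_comm ε]
  exact mul_lt_mul_of_pos_left hNy hua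

theorem eventually_mul_pow_le_setIntegral {φ g : ℝ → ℝ} {U : Set ℝ} {q : ℕ} {c : ℝ}
    (hq : q ≠ 0) (hU : U ∈ 𝓝[>] 0) (hgU : IntegrableOn g U) (hg : 0 ≤ g)
    (hgc : ∀ᶠ t in 𝓝[>] 0, c ≤ g t)
    {ε : ℝ} (hε : 0 < ε) (hφ : ∀ᶠ t in 𝓝[>] 0, φ t ≤ ε * t ^ (q : ℝ)⁻¹) :
    ∀ᶠ r in 𝓝[>] 0, c * (r / ε) ^ q ≤ ∫ t in {t | t ∈ U ∧ φ t ≤ r}, g t := by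
  obtain ⟨δ, hδ, hsmall⟩ := mem_nhdsGT_iff_exists_Ioo_subset.mp
    ((show ∀ᶠ t in 𝓝[>] 0, t ∈ U from hU).and (hgc.and hφ))
  have hT : Tendsto (fun r : ℝ => (r / ε) ^ q) (𝓝[>] 0) (𝓝 0) := by
    have : Continuous fun r : ℝ => (r / ε) ^ q := by fun_prop
    simpa [hq] using (this.tendsto 0).mono_left nhdsWithin_le_nhds
  filter_upwards [hT.eventually (eventually_lt_nhds hδ), self_mem_nhdsWithin]
    with r hTδ (hr : 0 < r)
  set T := (r / ε) ^ q
  have hsub : Ioc 0 T ⊆ {t | t ∈ U ∧ φ t ≤ r} := fun t ht => by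
    obtain ⟨htU, -, hφt⟩ := hsmall ⟨ht.1, ht.2.trans_lt hTδ⟩
    refine ⟨htU, hφt.trans ?_⟩
    calc ε * t ^ (q : ℝ)⁻¹ ≤ ε * T ^ (q : ℝ)⁻¹ := by gcongr; exacts [ht.1.le, ht.2]
      _ = r := by
        rw [Real.pow_rpow_inv_natCast (div_pos hr hε).le hq, mul_div_cancel₀ _ hε.ne']
  have hSU : {t | t ∈ U ∧ φ t ≤ r} ⊆ U := fun t ht => ht.1
  calc c * T = ∫ _ in Ioc 0 T, c := by
        rw [setIntegral_const, Real.volume_real_Ioc_of_le (by positivity), sub_zero,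
          smul_eq_mul, mul_comm]
    _ ≤ ∫ t in Ioc 0 T, g t :=
        setIntegral_mono_on (integrableOn_const measure_Ioc_lt_top.ne)
          (hgU.mono_set (hsub.trans hSU)) measurableSet_Ioc
          fun t ht => (hsmall ⟨ht.1, ht.2.trans_lt hTδ⟩).2.1
    _ ≤ ∫ t in {t | t ∈ U ∧ φ t ≤ r}, g t :=
        setIntegral_mono_set (hgU.mono_set hSU)
          (ae_of_all _ hg) hsub.eventuallyLE

theorem tendsto_setIntegral_div_pow_atTop {φ g : ℝ → ℝ} {U : Set ℝ} {q : ℕ} {c : ℝ}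
    (hq : q ≠ 0) (hU : U ∈ 𝓝[>] 0) (hgU : IntegrableOn g U) (hg : 0 ≤ g) (hc : 0 < c)
    (hgc : ∀ᶠ t in 𝓝[>] 0, c ≤ g t) (hφ : ∀ ε > 0, ∀ᶠ t in 𝓝[>] 0, φ t ≤ ε * t ^ (q : ℝ)⁻¹) :
    Tendsto (fun r => (∫ t in {t | t ∈ U ∧ φ t ≤ r}, g t) / r ^ q) (𝓝[>] 0) atTop := by
  refine tendsto_atTop.2 fun M => ?_
  set K := max M 1
  have hK : 0 < K := lt_max_of_lt_right one_pos
  set ε := min 1 (c / K)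
  have hε : 0 < ε := lt_min one_pos (div_pos hc hK)
  have hKε : K * ε ^ q ≤ c := by
    calc K * ε ^ q ≤ K * (c / K) :=
          mul_le_mul_of_nonneg_left ((pow_le_of_le_one hε.le (min_le_left _ _) hq).trans
            (min_le_right _ _)) hK.le
      _ = c := mul_div_cancel₀ _ hK.ne'
  filter_upwards [eventually_mul_pow_le_setIntegral hq hU hgU hg hgc hε (hφ ε hε),
    self_mem_nhdsWithin] with r hr (hr0 : 0 < r)
  rw [le_div_iff₀ (pow_pos hr0 q)]
  calc M * r ^ q ≤ K * r ^ q := by gcongr; exact le_max_left _ _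
    _ ≤ c * (r / ε) ^ q := by
        rw [div_pow, mul_div_assoc', le_div_iff₀ (pow_pos hε q), mul_right_comm]
        exact mul_le_mul_of_nonneg_right hKε (pow_pos hr0 q).le
    _ ≤ _ := hr

theorem rpow_natCast_div_eventuallyEq_pow (k : ℕ) (q : ℝ) :
    (fun t : ℝ => t ^ ((k : ℝ) / q)) =ᶠ[𝓝[>] 0] fun t => (t ^ q⁻¹) ^ k := by
  filter_upwards [self_mem_nhdsWithin] with t (ht : 0 < t)
  rw [← Real.rpow_natCast, ← Real.rpow_mul ht.le, div_eq_inv_mul]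

section GradedFrame

variable {n : ℕ} {d : Fin n → ℕ} {a : Fin n → Fin n → MvPolynomial (Fin n) ℝ}

theorem sum_smul_gradedFrame_apply (c : Fin n → ℝ) (x : Fin n → ℝ) (l : Fin n) :
    (∑ k, c k • gradedFrame n d a k x) l =
      c l + ∑ k with d k < d l, c k * eval x (a k l) := by
  simp [Finset.sum_apply, gradedFrame, mul_add, Finset.sum_add_distrib, Finset.sum_filter,
    mul_ite]

theorem isLittleO_rpow_of_gradedFrame_ode (hd : ∀ j, 1 ≤ d j)
    (ha : ∀ j l, d j < d l → (a j l).IsWeightedHomogeneous d (d l - d j)) {q : ℝ} (hq : 0 < q)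
    {γ : ℝ → Fin n → ℝ} (hγ : ContDiff ℝ 1 γ) (hγ0 : γ 0 = 0) {lam : Fin n → ℝ → ℝ}
    (hlam : ∀ k, lam k =o[𝓝[>] 0] fun t => t ^ ((d k : ℝ) / q - 1))
    (hode : ∀ᶠ t in 𝓝[>] 0, deriv γ t = ∑ k, lam k t • gradedFrame n d a k (γ t))
    (j : Fin n) : (fun t => γ t j) =o[𝓝[>] 0] fun t => t ^ ((d j : ℝ) / q) := by
  induction hdj : d j using Nat.strong_induction_on generalizing j with
  | _ D ih =>
    subst hdj
    have hpoly : ∀ k, d k < d j →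
        (fun t => eval (γ t) (a k j)) =o[𝓝[>] 0]
          fun t => t ^ ((d j : ℝ) / q - (d k : ℝ) / q) := by
      intro k hk
      have hsmall : ∀ i, d i ≤ d j - d k →
          (fun t => γ t i) =o[𝓝[>] 0] fun t => (t ^ q⁻¹) ^ d i := fun i hi =>
        (ih (d i) (by have := hd k; omega) i rfl).congr' EventuallyEq.rfl
          (rpow_natCast_div_eventuallyEq_pow _ _)
      refine ((ha k j hk).isLittleO_eval (by omega) hsmall).congr' EventuallyEq.rfl ?_
      refine (rpow_natCast_div_eventuallyEq_pow _ _).symm.trans (EventuallyEq.of_eq ?_)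
      rw [Nat.cast_sub hk.le, sub_div]
    have hterm : ∀ k ∈ Finset.univ.filter fun k => d k < d j,
        (fun t => lam k t * eval (γ t) (a k j)) =o[𝓝[>] 0] fun t => t ^ ((d j : ℝ) / q - 1) := by
      intro k hk
      refine ((hlam k).mul (hpoly k (Finset.mem_filter.1 hk).2)).congr' EventuallyEq.rfl ?_
      filter_upwards [self_mem_nhdsWithin] with t (ht : 0 < t)
      rw [← Real.rpow_add ht]
      ring_nf
    have hderiv : (fun t => deriv γ t j) =o[𝓝[>] 0] fun t => t ^ ((d j : ℝ) / q - 1) := by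
      refine ((hlam j).add (IsLittleO.fun_sum hterm)).congr' ?_ EventuallyEq.rfl
      filter_upwards [hode] with t ht
      rw [ht, sum_smul_gradedFrame_apply]
    have hdj : (0 : ℝ) < d j / q := div_pos (mod_cast hd j) hq
    have hγd := hγ.differentiable one_ne_zero
    simpa using isLittleO_rpow_add_one_of_hasDerivAt (f := fun t => γ t j) (by linarith)
      (fun t => hasDerivAt_pi.mp (hγd t).hasDerivAt j)
      ((continuous_apply j).comp (hγ.continuous_deriv le_rfl)) (by simp [hγ0]) hderiv

end GradedFrame

theorem arclength_in_ball_div_rpow_tendsto_atTop_of_low_degree_general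
    (n : ℕ) (d : Fin n → ℕ) (hd1 : ∀ j, 1 ≤ d j)
    (a : Fin n → Fin n → MvPolynomial (Fin n) ℝ)
    (ha : ∀ j l : Fin n, d j < d l → (a j l).IsWeightedHomogeneous d (d l - d j))
    (q : ℕ) (hq : 1 ≤ q)
    -- `ρ` is a metric on `ℝⁿ` inducing the Euclidean topology
    (ρ : (Fin n → ℝ) → (Fin n → ℝ) → ℝ)
    (hρtop : ∀ x : Fin n → ℝ, (𝓝 x).HasBasis (fun ε : ℝ => 0 < ε) fun ε => {y | ρ x y < ε})
    -- homogeneity of `ρ` with respect to the anisotropic dilations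
    (hρhom : ∀ r : ℝ, 0 < r → ∀ x : Fin n → ℝ,
      ρ 0 (fun j => r ^ (d j) * x j) = r * ρ 0 x)
    (γ : ℝ → Fin n → ℝ) (hγ : ContDiff ℝ 1 γ) (hγ0 : γ 0 = 0)
    (hγ'0 : deriv γ 0 ≠ 0)
    (lam : Fin n → ℝ → ℝ)
    (hlamc : ∀ j, ContinuousOn (lam j) (Set.Ioo (-1 : ℝ) 1))
    (hode : ∀ t ∈ Set.Ioo (-1 : ℝ) 1, deriv γ t = ∑ j, lam j t • gradedFrame n d a j (γ t))
    (hhigh : ∀ j, q < d j → ∀ t ∈ Set.Ioo (-1 : ℝ) 1, lam j t = 0)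
    (heq : ∀ j, d j = q → lam j 0 = 0) :
    Tendsto
      (fun r : ℝ =>
        (∫ t in {t : ℝ | t ∈ Set.Ioo (-1 : ℝ) 1 ∧ ρ 0 (γ t) ≤ r},
          Real.sqrt (∑ j, (deriv γ t j) ^ 2)) / r ^ q)
      (𝓝[>] 0) atTop := by
  have hq0 : (0 : ℝ) < q := by exact_mod_cast hq
  have hI : Ioo (-1 : ℝ) 1 ∈ 𝓝[>] 0 := Ioo_mem_nhdsGT_of_mem ⟨by norm_num, by norm_num⟩
  have hlam : ∀ k, lam k =o[𝓝[>] 0] fun t => t ^ ((d k : ℝ) / q - 1) := fun k =>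
    isLittleO_rpow_of_tendsto
      (((hlamc k).continuousAt (Ioo_mem_nhds (by norm_num) (by norm_num))).tendsto.mono_left
        nhdsWithin_le_nhds)
      (fun he => by
        rw [sub_pos, one_lt_div hq0, Nat.cast_lt] at he
        filter_upwards [hI] with t ht using hhigh k he t ht)
      (fun he => heq k (by rwa [sub_eq_zero, div_eq_one_iff_eq hq0.ne', Nat.cast_inj] at he))
  have hγo := isLittleO_rpow_of_gradedFrame_ode hd1 ha hq0 hγ hγ0 hlam (mem_of_superset hI hode)
  have hball := eventually_lt_mul_of_isLittleO_pow (fun ε hε => (hρtop 0).mem_of_mem hε) hρhom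
    (u := fun t => t ^ (q : ℝ)⁻¹)
    (eventually_mem_nhdsWithin.mono fun t (ht : 0 < t) => by positivity)
    fun j => (hγo j).congr' EventuallyEq.rfl (rpow_natCast_div_eventuallyEq_pow _ _)
  set g := fun t => Real.sqrt (∑ j, deriv γ t j ^ 2)
  have hg : Continuous g := by
    have := hγ.continuous_deriv le_rfl
    fun_prop
  have hg0 : 0 < g 0 := by
    obtain ⟨j, hj⟩ := Function.ne_iff.1 hγ'0
    exact Real.sqrt_pos.2 (Finset.sum_pos' (fun i _ => sq_nonneg _)
      ⟨j, Finset.mem_univ _, sq_pos_iff.2 hj⟩)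
  exact tendsto_setIntegral_div_pow_atTop (by omega) hI
    (hg.integrableOn_Icc.mono_set Ioo_subset_Icc_self) (fun t => Real.sqrt_nonneg _)
    (half_pos hg0) (((hg.tendsto 0).mono_left nhdsWithin_le_nhds).eventually
      (eventually_ge_nhds (half_lt_self hg0)))
    fun ε hε => (hball ε hε).mono fun t ht => ht.le

/-- Proposition 3.5 in graded coordinates: at a point of pointwise degree `< q` of a curve of
degree `≤ q`, the Euclidean arclength of the curve inside the ball of radius `r` of a
homogeneous metric `ρ`, divided by `r^q`, blows up as `r → 0⁺`. -/
theorem arclength_in_ball_div_rpow_tendsto_atTop_of_low_degree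
    (n : ℕ) (hn : 1 ≤ n) (d : Fin n → ℕ) (hd1 : ∀ j, 1 ≤ d j) (hmono : Monotone d)
    (a : Fin n → Fin n → MvPolynomial (Fin n) ℝ)
    (ha : ∀ j l : Fin n, d j < d l → (a j l).IsWeightedHomogeneous d (d l - d j))
    (q : ℕ) (hq : 1 ≤ q)
    -- `ρ` is a metric on `ℝⁿ` inducing the Euclidean topology
    (ρ : (Fin n → ℝ) → (Fin n → ℝ) → ℝ)
    (hρsymm : ∀ x y, ρ x y = ρ y x)
    (hρtri : ∀ x y z, ρ x z ≤ ρ x y + ρ y z)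
    (hρeq : ∀ x y, ρ x y = 0 ↔ x = y)
    (hρtop : ∀ x : Fin n → ℝ, (𝓝 x).HasBasis (fun ε : ℝ => 0 < ε) fun ε => {y | ρ x y < ε})
    -- homogeneity of `ρ` with respect to the anisotropic dilations
    (hρhom : ∀ r : ℝ, 0 < r → ∀ x : Fin n → ℝ,
      ρ 0 (fun j => r ^ (d j) * x j) = r * ρ 0 x)
    (γ : ℝ → Fin n → ℝ) (hγ : ContDiff ℝ 1 γ) (hγ0 : γ 0 = 0)
    (hγ'0 : deriv γ 0 ≠ 0)
    (lam : Fin n → ℝ → ℝ)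
    (hlamc : ∀ j, ContinuousOn (lam j) (Set.Ioo (-1 : ℝ) 1))
    (hode : ∀ t ∈ Set.Ioo (-1 : ℝ) 1, deriv γ t = ∑ j, lam j t • gradedFrame n d a j (γ t))
    (hhigh : ∀ j, q < d j → ∀ t ∈ Set.Ioo (-1 : ℝ) 1, lam j t = 0)
    (heq : ∀ j, d j = q → lam j 0 = 0) :
    Tendsto
      (fun r : ℝ =>
        (∫ t in {t : ℝ | t ∈ Set.Ioo (-1 : ℝ) 1 ∧ ρ 0 (γ t) ≤ r},
          Real.sqrt (∑ j, (deriv γ t j) ^ 2)) / r ^ q)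
      (𝓝[>] 0) atTop :=
  arclength_in_ball_div_rpow_tendsto_atTop_of_low_degree_general n d hd1 a ha q hq ρ hρtop hρhom γ
    hγ hγ0 hγ'0 lam hlamc hode hhigh heq
end

section
/- Fix n ≥ 1, a weight vector d : Fin n → ℕ with d j ≥ 1 for all j, an integer q ≥ 1, and an index i₀ with d i₀ = q. Let ρ be a metric on ℝⁿ inducing the Euclidean topology with ρ(0, δ_r x) = r·ρ(0,x) for all r > 0 and x, where (δ_r x)_j = r^{d j}·x_j. Let γ : [−1,1] → ℝⁿ be a C¹ injective curve with γ(0) = 0, such that γ_i(t) = o(|t|^{(d i)/q}) as t → 0 for every i ≠ i₀, and such that c := (γ')_{i₀}(0) ≠ 0. Then, as r → 0⁺, r^{−q} · ∫_{{t ∈ [−1,1] : ρ(0, γ(t)) < r}} ‖γ'(t)‖ dt converges to (‖γ'(0)‖ / |c|) · L¹({s ∈ ℝ : ρ(0, s·e_{i₀}) < 1}), where ‖·‖ is the Euclidean norm and L¹ is one-dimensional Lebesgue measure. -/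
/-!
Put `g(t) = ρ(0, γ(t))` and `e = e_{i₀}`. By homogeneity
`g(t) = |t|^{1/q} ρ(0, δ_{|t|^{-1/q}} γ(t))`, and the blow-up hypotheses say exactly that
`δ_{|t|^{-1/q}} γ(t) → ±c e` as `t → 0±`; hence
`g(t)^q / |t| → a_± := ρ(0, ±c e)^q > 0`. So for `a' < a_± < b` and small `r`, the set `{g < r}`
contains `(0, r^q/b)` on each side and, once `r` is below the minimum of `g` off a small interval
(compactness and injectivity), lies in `(0, r^q/a')` on each side: its length is
`r^q (a_+⁻¹ + a_-⁻¹) + o(r^q)`, and by continuity of `‖γ'‖` at `0` the integral is `‖γ'(0)‖` times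
that length up to `o(r^q)`. On the axis `ρ(0, s e)^q = |s| ρ(0, ±e)^q`, which gives
`L¹{s : ρ(0, s e) < 1} = |c| (a_+⁻¹ + a_-⁻¹)`.
-/

open Filter Asymptotics Topology MeasureTheory Set

section DistanceFunction

variable {X : Type*} {ρ : X → X → ℝ}

theorem nonneg_of_symm_of_triangle (hsymm : ∀ x y, ρ x y = ρ y x)
    (htri : ∀ x y z, ρ x z ≤ ρ x y + ρ y z) (hself : ∀ x, ρ x x = 0) (x y : X) : 0 ≤ ρ x y := by
  linarith [htri x y x, hsymm x y, hself x]

theorem pos_of_ne_of_symm_of_triangle (hsymm : ∀ x y, ρ x y = ρ y x)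
    (htri : ∀ x y z, ρ x z ≤ ρ x y + ρ y z) (heq : ∀ x y, ρ x y = 0 ↔ x = y) {x y : X}
    (hxy : x ≠ y) : 0 < ρ x y :=
  (nonneg_of_symm_of_triangle hsymm htri (fun x => (heq x x).2 rfl) x y).lt_of_ne'
    fun h => hxy ((heq x y).1 h)

theorem continuous_of_hasBasis_nhds [TopologicalSpace X] (hsymm : ∀ x y, ρ x y = ρ y x)
    (htri : ∀ x y z, ρ x z ≤ ρ x y + ρ y z)
    (htop : ∀ x, (𝓝 x).HasBasis (fun ε : ℝ => 0 < ε) fun ε => {y | ρ x y < ε}) (x₀ : X) :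
    Continuous (ρ x₀) := by
  refine continuous_iff_continuousAt.2 fun x => Metric.tendsto_nhds.2 fun ε hε => ?_
  filter_upwards [(htop x).mem_of_mem hε] with y (hy : ρ x y < ε)
  rw [Real.dist_eq, abs_sub_lt_iff]
  constructor <;> linarith [htri x₀ x y, htri x₀ y x, hsymm x y]

end DistanceFunction

theorem IsCompact.eventually_sublevel_subset_ball {X : Type*} [PseudoMetricSpace X] {K : Set X}
    (hK : IsCompact K) {g : X → ℝ} (hg : ContinuousOn g K) {x₀ : X}
    (hpos : ∀ x ∈ K, x ≠ x₀ → 0 < g x) {δ : ℝ} (hδ : 0 < δ) :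
    ∀ᶠ r in 𝓝[>] 0, {x | x ∈ K ∧ g x < r} ⊆ Metric.ball x₀ δ := by
  set K' := K \ Metric.ball x₀ δ
  rcases K'.eq_empty_or_nonempty with hempty | hne
  · refine Eventually.of_forall fun r x ⟨hx, _⟩ => ?_
    by_contra hfar
    exact (Set.eq_empty_iff_forall_notMem.1 hempty) x ⟨hx, hfar⟩
  obtain ⟨x₁, ⟨hx₁K, hx₁far⟩, hmin⟩ :=
    (hK.diff Metric.isOpen_ball).exists_isMinOn hne (hg.mono sdiff_subset)
  have hx₁ : x₁ ≠ x₀ := by rintro rfl; exact hx₁far (Metric.mem_ball_self hδ)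
  filter_upwards [Ioo_mem_nhdsGT (hpos x₁ hx₁K hx₁)] with r hr x ⟨hx, hgx⟩
  by_contra hfar
  exact (hmin ⟨hx, hfar⟩).not_gt (hgx.trans hr.2)

section SetIntegral

variable {X ι : Type*} [PseudoMetricSpace X] [MeasurableSpace X] {μ : Measure X} {f : X → ℝ}
  {S : Set X} {x₀ : X} {A : ι → Set X} {l : Filter ι}

theorem isLittleO_setIntegral_sub_measureReal_mul (hf : ContinuousWithinAt f S x₀)
    (hAS : ∀ i, A i ⊆ S) (hint : ∀ i, IntegrableOn f (A i) μ) (hfin : ∀ i, μ (A i) < ⊤)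
    (hshrink : ∀ δ > 0, ∀ᶠ i in l, A i ⊆ Metric.ball x₀ δ) :
    (fun i => ∫ x in A i, f x ∂μ - μ.real (A i) * f x₀) =o[l] fun i => μ.real (A i) := by
  refine IsLittleO.of_bound fun ε hε => ?_
  obtain ⟨δ, hδ, hclose⟩ := Metric.continuousWithinAt_iff.1 hf ε hε
  filter_upwards [hshrink δ hδ] with i hball
  have hdiff : ∫ x in A i, f x ∂μ - μ.real (A i) * f x₀ = ∫ x in A i, (f x - f x₀) ∂μ := by
    rw [integral_sub (hint i) (integrableOn_const (hfin i).ne), setIntegral_const, smul_eq_mul]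
  rw [hdiff, Real.norm_of_nonneg measureReal_nonneg]
  exact norm_setIntegral_le_of_norm_le_const (hfin i) fun x hx =>
    (hclose (hAS i hx) (hball hx)).le

theorem tendsto_setIntegral_div_of_tendsto_measureReal_div (hf : ContinuousWithinAt f S x₀)
    (hAS : ∀ i, A i ⊆ S) (hint : ∀ i, IntegrableOn f (A i) μ) (hfin : ∀ i, μ (A i) < ⊤)
    (hshrink : ∀ δ > 0, ∀ᶠ i in l, A i ⊆ Metric.ball x₀ δ) {w : ι → ℝ} {V : ℝ}
    (hvol : Tendsto (fun i => μ.real (A i) / w i) l (𝓝 V)) :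
    Tendsto (fun i => (∫ x in A i, f x ∂μ) / w i) l (𝓝 (f x₀ * V)) := by
  have herr : Tendsto (fun i => (∫ x in A i, f x ∂μ - μ.real (A i) * f x₀) / w i) l (𝓝 0) :=
    (isLittleO_one_iff ℝ).1 <|
      ((isLittleO_setIntegral_sub_measureReal_mul hf hAS hint hfin hshrink).mul_isBigO
        (isBigO_refl (fun i => (w i)⁻¹) l)).trans_isBigO (hvol.isBigO_one ℝ)
  rw [← zero_add (f x₀ * V)]
  refine (herr.add (hvol.const_mul (f x₀))).congr fun i => ?_
  ring

end SetIntegral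

section Dilation

variable {n : ℕ} {d : Fin n → ℕ} {q : ℕ} {N : (Fin n → ℝ) → ℝ}

def dilation (d : Fin n → ℕ) (r : ℝ) (x : Fin n → ℝ) : Fin n → ℝ := fun j => r ^ d j * x j

theorem dilation_dilation_inv {r : ℝ} (hr : r ≠ 0) (x : Fin n → ℝ) :
    dilation d r (dilation d r⁻¹ x) = x := by
  funext j
  simp only [dilation, inv_pow]
  exact mul_inv_cancel_left₀ (pow_ne_zero _ hr) _

def IsDilationHomogeneous (d : Fin n → ℕ) (N : (Fin n → ℝ) → ℝ) : Prop :=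
  ∀ r : ℝ, 0 < r → ∀ x, N (dilation d r x) = r * N x

namespace IsDilationHomogeneous

theorem map_zero (hN : IsDilationHomogeneous d N) : N 0 = 0 := by
  have h := hN 2 two_pos 0
  rw [show dilation d 2 0 = 0 by funext j; simp [dilation]] at h
  linarith

/-- `hv` places `v` in the layer of degree `q`, on which `δ_r` is multiplication by `r ^ q`. -/
theorem smul_pow (hN : IsDilationHomogeneous d N) (hq : q ≠ 0) {v : Fin n → ℝ}
    (hv : ∀ j, v j ≠ 0 → d j = q) {s : ℝ} (hs : 0 < s) : N (s • v) ^ q = s * N v ^ q := by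
  set r := s ^ (q : ℝ)⁻¹
  have hrq : r ^ q = s := Real.rpow_inv_natCast_pow hs.le hq
  have hdil : dilation d r v = s • v := by
    funext j
    by_cases hj : v j = 0
    · simp [dilation, hj]
    · simp [dilation, hv j hj, hrq]
  rw [← hdil, hN r (Real.rpow_pos_of_pos hs _), mul_pow, hrq]

theorem smul_lt_one_iff (hN : IsDilationHomogeneous d N) (hN0 : ∀ x, 0 ≤ N x) (hq : q ≠ 0)
    {v : Fin n → ℝ} (hv : ∀ j, v j ≠ 0 → d j = q) (hNv : 0 < N v) {s : ℝ} (hs : 0 < s) :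
    N (s • v) < 1 ↔ s < (N v ^ q)⁻¹ := by
  rw [← pow_lt_one_iff_of_nonneg (hN0 _) hq, hN.smul_pow hq hv hs, inv_eq_one_div,
    lt_div_iff₀ (pow_pos hNv q)]

theorem setOf_smul_lt_one (hN : IsDilationHomogeneous d N) (hN0 : ∀ x, 0 ≤ N x) (hq : q ≠ 0)
    {v : Fin n → ℝ} (hv : ∀ j, v j ≠ 0 → d j = q) (hpos : 0 < N v) (hneg : 0 < N (-v)) :
    {s : ℝ | N (s • v) < 1} = Ioo (-(N (-v) ^ q)⁻¹) (N v ^ q)⁻¹ := by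
  have hposq := inv_pos.2 (pow_pos hpos q)
  have hnegq := inv_pos.2 (pow_pos hneg q)
  ext s
  simp only [mem_ofPred_eq, mem_Ioo]
  rcases lt_trichotomy s 0 with hs | rfl | hs
  · have hv' : ∀ j, (-v) j ≠ 0 → d j = q := fun j hj => hv j (by simpa using hj)
    rw [← neg_smul_neg, hN.smul_lt_one_iff hN0 hq hv' hneg (neg_pos.2 hs)]
    constructor
    · intro h; constructor <;> linarith
    · intro h; linarith [h.1]
  · simp [hN.map_zero, hposq, hnegq]
  · rw [hN.smul_lt_one_iff hN0 hq hv hpos hs]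
    constructor
    · intro h; constructor <;> linarith
    · intro h; exact h.2

theorem measureReal_setOf_smul_lt_one (hN : IsDilationHomogeneous d N) (hN0 : ∀ x, 0 ≤ N x)
    (hq : q ≠ 0) {v : Fin n → ℝ} (hv : ∀ j, v j ≠ 0 → d j = q) {c : ℝ} (hc : c ≠ 0)
    (hpos : 0 < N (c • v)) (hneg : 0 < N (-(c • v))) :
    volume.real {s : ℝ | N (s • v) < 1} = |c| * ((N (c • v) ^ q)⁻¹ + (N (-(c • v)) ^ q)⁻¹) := by
  have hcv : ∀ j, (c • v) j ≠ 0 → d j = q := fun j hj => hv j (right_ne_zero_of_mul hj)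
  have hpre : {s : ℝ | N (s • v) < 1} = (c⁻¹ * ·) ⁻¹' {u : ℝ | N (u • (c • v)) < 1} := by
    ext s
    simp only [mem_preimage, mem_ofPred_eq, smul_smul, mul_right_comm, inv_mul_cancel₀ hc,
      one_mul]
  rw [measureReal_def, hpre, Real.volume_preimage_mul_left (inv_ne_zero hc),
    hN.setOf_smul_lt_one hN0 hq hcv hpos hneg, Real.volume_Ioo, sub_neg_eq_add,
    ENNReal.toReal_mul, ENNReal.toReal_ofReal (abs_nonneg _), ENNReal.toReal_ofReal
      (add_pos (inv_pos.2 (pow_pos hpos q)) (inv_pos.2 (pow_pos hneg q))).le, inv_inv]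

/-- Blow-up along a curve leaving the origin in the direction `e_{i₀}` of degree `q`:
`δ_{t^{-1/q}} x(t) → v_{i₀} e_{i₀}`, so `N(x(t)) ~ t^{1/q} N(v_{i₀} e_{i₀})`. -/
theorem tendsto_pow_div_of_hasDerivWithinAt_Ioi (hN : IsDilationHomogeneous d N)
    (hNc : Continuous N) (hq : q ≠ 0) {i₀ : Fin n} (hi₀ : d i₀ = q) {x : ℝ → Fin n → ℝ}
    {v : Fin n → ℝ} (hx0 : x 0 = 0)
    (hderiv : HasDerivWithinAt x v (Ioi 0) 0)
    (hlito : ∀ j, j ≠ i₀ → (fun t => x t j) =o[𝓝 0] fun t => |t| ^ ((d j : ℝ) / q)) :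
    Tendsto (fun t => N (x t) ^ q / t) (𝓝[>] 0) (𝓝 (N (v i₀ • Pi.single i₀ 1) ^ q)) := by
  set y : ℝ → Fin n → ℝ := fun t => dilation d (t ^ (q : ℝ)⁻¹)⁻¹ (x t)
  have hy_apply : ∀ t > 0, ∀ j, y t j = x t j / |t| ^ ((d j : ℝ) / q) := by
    intro t ht j
    rw [abs_of_pos ht, div_eq_inv_mul, div_eq_inv_mul, Real.rpow_mul ht.le, Real.rpow_natCast]
    simp only [y, dilation, inv_pow]
  have hy : Tendsto y (𝓝[>] 0) (𝓝 (v i₀ • Pi.single i₀ 1)) := by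
    refine tendsto_pi_nhds.2 fun j => ?_
    by_cases hj : j = i₀
    · subst hj
      have hslope := hasDerivWithinAt_iff_tendsto_slope.1 hderiv
      rw [sdiff_singleton_eq_self self_notMem_Ioi] at hslope
      rw [Pi.smul_apply, Pi.single_eq_same, smul_eq_mul, mul_one]
      refine (((continuous_apply j).tendsto v).comp hslope).congr' ?_
      filter_upwards [self_mem_nhdsWithin] with t (ht : 0 < t)
      rw [hy_apply t ht, hi₀, div_self (Nat.cast_ne_zero.2 hq), Real.rpow_one, abs_of_pos ht]
      simp [slope_def_module, hx0, div_eq_inv_mul]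
    · rw [Pi.smul_apply, Pi.single_eq_of_ne hj, smul_zero]
      refine ((hlito j hj).tendsto_div_nhds_zero.mono_left nhdsWithin_le_nhds).congr' ?_
      filter_upwards [self_mem_nhdsWithin] with t (ht : 0 < t)
      exact (hy_apply t ht j).symm
  refine ((hNc.tendsto _).comp hy).pow q |>.congr' ?_
  filter_upwards [self_mem_nhdsWithin] with t (ht : 0 < t)
  have hr : 0 < t ^ (q : ℝ)⁻¹ := Real.rpow_pos_of_pos ht _
  have hxy : x t = dilation d (t ^ (q : ℝ)⁻¹) (y t) := (dilation_dilation_inv hr.ne' _).symm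
  rw [Function.comp_apply, hxy, hN _ hr, mul_pow, Real.rpow_inv_natCast_pow ht.le hq,
    mul_div_cancel_left₀ _ ht.ne']

theorem tendsto_pow_div_of_hasDerivWithinAt_of_mem_nhds (hN : IsDilationHomogeneous d N)
    (hNc : Continuous N) (hq : q ≠ 0) {i₀ : Fin n} (hi₀ : d i₀ = q) {x : ℝ → Fin n → ℝ}
    {v : Fin n → ℝ} {S : Set ℝ}
    (hS : S ∈ 𝓝 0) (hx0 : x 0 = 0) (hderiv : HasDerivWithinAt x v S 0)
    (hlito : ∀ j, j ≠ i₀ → (fun t => x t j) =o[𝓝 0] fun t => |t| ^ ((d j : ℝ) / q)) :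
    Tendsto (fun t => N (x t) ^ q / t) (𝓝[>] 0) (𝓝 (N (v i₀ • Pi.single i₀ 1) ^ q)) ∧
      Tendsto (fun t => N (x (-t)) ^ q / t) (𝓝[>] 0)
        (𝓝 (N (-(v i₀ • Pi.single i₀ 1)) ^ q)) := by
  refine ⟨hN.tendsto_pow_div_of_hasDerivWithinAt_Ioi hNc hq hi₀ hx0
    (hderiv.mono_of_mem_nhdsWithin (mem_nhdsWithin_of_mem_nhds hS)) hlito, ?_⟩
  have hderiv' : HasDerivWithinAt x v (Iio 0) (-0) := by
    rw [neg_zero]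
    exact hderiv.mono_of_mem_nhdsWithin (mem_nhdsWithin_of_mem_nhds hS)
  have hmaps : MapsTo Neg.neg (Ioi (0 : ℝ)) (Iio 0) := fun t (ht : 0 < t) => neg_lt_zero.2 ht
  have hderiv_refl : HasDerivWithinAt (fun t => x (-t)) (-v) (Ioi 0) 0 := by
    simpa [Function.comp_def] using hderiv'.scomp 0 (hasDerivAt_neg 0).hasDerivWithinAt hmaps
  have hlito_refl : ∀ j, j ≠ i₀ → (fun t => x (-t) j) =o[𝓝 0] fun t => |t| ^ ((d j : ℝ) / q) :=
    fun j hj => by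
      simpa [Function.comp_def, abs_neg] using
        (hlito j hj).comp_tendsto (continuous_neg.tendsto' (0 : ℝ) 0 neg_zero)
  simpa [neg_smul] using hN.tendsto_pow_div_of_hasDerivWithinAt_Ioi hNc hq hi₀
    (by rwa [neg_zero]) hderiv_refl hlito_refl

end IsDilationHomogeneous

end Dilation

section Sublevel

variable {S : Set ℝ} {g : ℝ → ℝ} {q : ℕ}

theorem eventually_measureReal_sublevel_le (hS : S ⊆ Ioi 0) (hg : ∀ t ∈ S, 0 ≤ g t)
    (hq : q ≠ 0) (hshrink : ∀ δ > 0, ∀ᶠ r in 𝓝[>] 0, {t | t ∈ S ∧ g t < r} ⊆ Metric.ball 0 δ)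
    {a : ℝ} (ha : 0 < a) (hlow : ∀ᶠ t in 𝓝[>] 0, a * t < g t ^ q) :
    ∀ᶠ r in 𝓝[>] 0, volume.real {t | t ∈ S ∧ g t < r} ≤ r ^ q / a := by
  obtain ⟨u, hu, hlow⟩ := mem_nhdsGT_iff_exists_Ioo_subset.1 hlow
  filter_upwards [hshrink u hu, self_mem_nhdsWithin] with r hsmall (hr : 0 < r)
  have hsub : {t | t ∈ S ∧ g t < r} ⊆ Ioo 0 (r ^ q / a) := by
    rintro t ⟨htS, hgt⟩
    have ht : 0 < t := hS htS
    have htu : t < u := by simpa [abs_of_pos ht] using hsmall ⟨htS, hgt⟩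
    have hat : a * t < r ^ q := (hlow ⟨ht, htu⟩).trans (pow_lt_pow_left₀ hgt (hg t htS) hq)
    exact ⟨ht, by rwa [lt_div_iff₀ ha, mul_comm]⟩
  calc volume.real {t | t ∈ S ∧ g t < r} ≤ volume.real (Ioo 0 (r ^ q / a)) :=
        measureReal_mono hsub measure_Ioo_lt_top.ne
    _ = r ^ q / a := by rw [Real.volume_real_Ioo_of_le (by positivity), sub_zero]

theorem eventually_le_measureReal_sublevel (hS : S ∈ 𝓝[>] 0) (hSfin : volume S ≠ ⊤)
    (hq : q ≠ 0) {b : ℝ} (hb : 0 < b)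
    (hup : ∀ᶠ t in 𝓝[>] 0, g t ^ q < b * t) :
    ∀ᶠ r in 𝓝[>] 0, r ^ q / b ≤ volume.real {t | t ∈ S ∧ g t < r} := by
  obtain ⟨u, hu, hsub⟩ := mem_nhdsGT_iff_exists_Ioo_subset.1 (inter_mem hS hup)
  have hsmall : ∀ᶠ r in 𝓝[>] (0 : ℝ), r ^ q / b < u := by
    have : Tendsto (fun r : ℝ => r ^ q / b) (𝓝 0) (𝓝 (0 ^ q / b)) :=
      ((continuous_pow q).div_const b).tendsto 0
    rw [zero_pow hq, zero_div] at this
    exact (this.mono_left nhdsWithin_le_nhds).eventually_lt_const hu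
  filter_upwards [hsmall, self_mem_nhdsWithin] with r hru (hr : 0 < r)
  have hIoo : Ioo 0 (r ^ q / b) ⊆ {t | t ∈ S ∧ g t < r} := by
    rintro t ⟨ht, htr⟩
    obtain ⟨htS, hgt⟩ := hsub ⟨ht, htr.trans hru⟩
    refine ⟨htS, lt_of_pow_lt_pow_left₀ q hr.le (hgt.trans ?_)⟩
    rwa [lt_div_iff₀ hb, mul_comm] at htr
  calc r ^ q / b = volume.real (Ioo 0 (r ^ q / b)) := by
        rw [Real.volume_real_Ioo_of_le (by positivity), sub_zero]
    _ ≤ volume.real {t | t ∈ S ∧ g t < r} :=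
        measureReal_mono hIoo (ne_top_of_le_ne_top hSfin (measure_mono fun t ht => ht.1))

theorem tendsto_measureReal_sublevel_div_pow_of_subset_Ioi (hS0 : S ⊆ Ioi 0) (hS : S ∈ 𝓝[>] 0)
    (hSfin : volume S ≠ ⊤) (hg : ∀ t ∈ S, 0 ≤ g t) (hq : q ≠ 0)
    (hshrink : ∀ δ > 0, ∀ᶠ r in 𝓝[>] 0, {t | t ∈ S ∧ g t < r} ⊆ Metric.ball 0 δ)
    {a : ℝ} (ha : 0 < a)
    (hlim : Tendsto (fun t => g t ^ q / t) (𝓝[>] 0) (𝓝 a)) :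
    Tendsto (fun r => volume.real {t | t ∈ S ∧ g t < r} / r ^ q) (𝓝[>] 0) (𝓝 a⁻¹) := by
  refine tendsto_order.2 ⟨fun l hl => ?_, fun u hu => ?_⟩
  · obtain ⟨b, hab, hlb⟩ : ∃ b, a < b ∧ l < b⁻¹ := by
      rcases le_or_gt l 0 with hl0 | hl0
      · exact ⟨a + 1, by linarith, hl0.trans_lt (inv_pos.2 (by linarith))⟩
      · obtain ⟨b, hab, hbl⟩ := exists_between ((lt_inv_comm₀ hl0 ha).1 hl)
        exact ⟨b, hab, (lt_inv_comm₀ hl0 (ha.trans hab)).2 hbl⟩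
    have hup : ∀ᶠ t in 𝓝[>] 0, g t ^ q < b * t := by
      filter_upwards [hlim.eventually_lt_const hab, self_mem_nhdsWithin] with t h (ht : 0 < t)
        using (div_lt_iff₀ ht).1 h
    filter_upwards [eventually_le_measureReal_sublevel hS hSfin hq (ha.trans hab) hup,
      self_mem_nhdsWithin] with r hr (hr0 : 0 < r)
    calc l < b⁻¹ := hlb
      _ = r ^ q / b / r ^ q := by field_simp
      _ ≤ _ := div_le_div_of_nonneg_right hr (pow_pos hr0 q).le
  · obtain ⟨a', ha'u, ha'a⟩ := exists_between ((inv_lt_comm₀ ha (inv_pos.2 ha |>.trans hu)).1 hu)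
    have ha' : 0 < a' := (inv_pos.2 (inv_pos.2 ha |>.trans hu)).trans ha'u
    have hlow : ∀ᶠ t in 𝓝[>] 0, a' * t < g t ^ q := by
      filter_upwards [hlim.eventually_const_lt ha'a, self_mem_nhdsWithin] with t h (ht : 0 < t)
        using (lt_div_iff₀ ht).1 h
    filter_upwards [eventually_measureReal_sublevel_le hS0 hg hq hshrink ha' hlow,
      self_mem_nhdsWithin] with r hr (hr0 : 0 < r)
    calc _ ≤ r ^ q / a' / r ^ q := div_le_div_of_nonneg_right hr (pow_pos hr0 q).le
      _ = a'⁻¹ := by field_simp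
      _ < u := (inv_lt_comm₀ ha' (inv_pos.2 ha |>.trans hu)).2 ha'u

theorem volume_eq_volume_inter_Ioi_add_volume_neg_inter_Ioi (s : Set ℝ) :
    volume s = volume (s ∩ Ioi 0) + volume (-s ∩ Ioi 0) := by
  rw [← measure_inter_add_sdiff s measurableSet_Ioi, sdiff_eq, compl_Ioi]
  congr 1
  calc volume (s ∩ Iic 0) = volume (s ∩ Iio 0) :=
        measure_congr ((ae_eq_refl s).inter Iio_ae_eq_Iic).symm
    _ = volume (-s ∩ Ioi 0) := by
        rw [← Measure.measure_neg, Set.inter_neg, Set.neg_Iio, neg_zero]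

theorem tendsto_measureReal_sublevel_div_pow_of_mem_nhds (hS : S ∈ 𝓝 0)
    (hSfin : volume S ≠ ⊤) (hg : ∀ t ∈ S, 0 ≤ g t) (hq : q ≠ 0)
    (hshrink : ∀ δ > 0, ∀ᶠ r in 𝓝[>] 0, {t | t ∈ S ∧ g t < r} ⊆ Metric.ball 0 δ) {a b : ℝ}
    (ha : 0 < a) (hb : 0 < b) (hright : Tendsto (fun t => g t ^ q / t) (𝓝[>] 0) (𝓝 a))
    (hleft : Tendsto (fun t => g (-t) ^ q / t) (𝓝[>] 0) (𝓝 b)) :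
    Tendsto (fun r => volume.real {t | t ∈ S ∧ g t < r} / r ^ q) (𝓝[>] 0) (𝓝 (a⁻¹ + b⁻¹)) := by
  have hfin : ∀ T ⊆ S, volume T ≠ ⊤ := fun T hT => ne_top_of_le_ne_top hSfin (measure_mono hT)
  have hnegfin : volume (-S) ≠ ⊤ := by rwa [Measure.measure_neg]
  have hR := tendsto_measureReal_sublevel_div_pow_of_subset_Ioi inter_subset_right
    (inter_mem (mem_nhdsWithin_of_mem_nhds hS) self_mem_nhdsWithin)
    (hfin _ inter_subset_left) (fun t ht => hg t ht.1) hq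
    (fun δ hδ => (hshrink δ hδ).mono fun r h t ht => h ⟨ht.1.1, ht.2⟩) ha hright
  have hL := tendsto_measureReal_sublevel_div_pow_of_subset_Ioi (g := fun t => g (-t))
    inter_subset_right
    (inter_mem (mem_nhdsWithin_of_mem_nhds (neg_mem_nhds_zero ℝ hS)) self_mem_nhdsWithin)
    (ne_top_of_le_ne_top hnegfin (measure_mono inter_subset_left)) (fun t ht => hg _ ht.1) hq
    (fun δ hδ => (hshrink δ hδ).mono fun r h t ht => by simpa using h ⟨ht.1.1, ht.2⟩) hb hleft
  refine (hR.add hL).congr fun r => ?_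
  set A := {t | t ∈ S ∧ g t < r}
  have hApos : A ∩ Ioi 0 = {t | t ∈ S ∩ Ioi 0 ∧ g t < r} := by
    ext t; simp only [A, mem_inter_iff, mem_ofPred_eq]; tauto
  have hAneg : -A ∩ Ioi 0 = {t | t ∈ -S ∩ Ioi 0 ∧ g (-t) < r} := by
    ext t; simp only [A, mem_inter_iff, Set.mem_neg, mem_ofPred_eq]; tauto
  have hAfin : volume A ≠ ⊤ := hfin A fun t ht => ht.1
  have hAnegfin : volume (-A) ≠ ⊤ := by rwa [Measure.measure_neg]
  rw [← add_div, ← hApos, ← hAneg, measureReal_def volume A,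
    volume_eq_volume_inter_Ioi_add_volume_neg_inter_Ioi A,
    ENNReal.toReal_add (ne_top_of_le_ne_top hAfin (measure_mono inter_subset_left))
      (ne_top_of_le_ne_top hAnegfin (measure_mono inter_subset_left))]
  rfl

end Sublevel

theorem blowup_measure_limit_at_max_degree_point_general
    (n : ℕ) (d : Fin n → ℕ)
    (q : ℕ) (hq : 1 ≤ q) (i₀ : Fin n) (hi₀ : d i₀ = q)
    -- `ρ` is a metric on `ℝⁿ` inducing the Euclidean topology
    (ρ : (Fin n → ℝ) → (Fin n → ℝ) → ℝ)
    (hρsymm : ∀ x y, ρ x y = ρ y x)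
    (hρtri : ∀ x y z, ρ x z ≤ ρ x y + ρ y z)
    (hρeq : ∀ x y, ρ x y = 0 ↔ x = y)
    (hρtop : ∀ x : Fin n → ℝ, (𝓝 x).HasBasis (fun ε : ℝ => 0 < ε) fun ε => {y | ρ x y < ε})
    -- homogeneity of `ρ` with respect to the anisotropic dilations
    (hρhom : ∀ r : ℝ, 0 < r → ∀ x : Fin n → ℝ,
      ρ 0 (fun j => r ^ (d j) * x j) = r * ρ 0 x)
    -- `γ : [-1,1] → ℝⁿ` is a `C¹` injective curve with derivative `γ'`
    (γ γ' : ℝ → Fin n → ℝ)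
    (hderiv : ∀ t ∈ Set.Icc (-1 : ℝ) 1, HasDerivWithinAt γ (γ' t) (Set.Icc (-1 : ℝ) 1) t)
    (hγ'c : ContinuousOn γ' (Set.Icc (-1 : ℝ) 1))
    (hinj : Set.InjOn γ (Set.Icc (-1 : ℝ) 1))
    (hγ0 : γ 0 = 0)
    (hlito : ∀ i, i ≠ i₀ →
      (fun t : ℝ => γ t i) =o[𝓝 0] fun t : ℝ => |t| ^ ((d i : ℝ) / (q : ℝ)))
    (hc : γ' 0 i₀ ≠ 0) :
    Tendsto
      (fun r : ℝ =>
        (∫ t in {t : ℝ | t ∈ Set.Icc (-1 : ℝ) 1 ∧ ρ 0 (γ t) < r},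
          Real.sqrt (∑ j, (γ' t j) ^ 2)) / r ^ q)
      (𝓝[>] 0)
      (𝓝 ((Real.sqrt (∑ j, (γ' 0 j) ^ 2) / |γ' 0 i₀|) *
        (volume {s : ℝ | ρ 0 (s • (Pi.single i₀ 1 : Fin n → ℝ)) < 1}).toReal)) := by
  have hq0 : q ≠ 0 := Nat.one_le_iff_ne_zero.1 hq
  have hN : IsDilationHomogeneous d (ρ 0) := hρhom
  have hN0 : ∀ x, 0 ≤ ρ 0 x := nonneg_of_symm_of_triangle hρsymm hρtri (fun x => (hρeq x x).2 rfl) 0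
  have hNpos : ∀ x, x ≠ 0 → 0 < ρ 0 x := fun x hx =>
    pos_of_ne_of_symm_of_triangle hρsymm hρtri hρeq (Ne.symm hx)
  have hNc : Continuous (ρ 0) := continuous_of_hasBasis_nhds hρsymm hρtri hρtop 0
  set e : Fin n → ℝ := Pi.single i₀ 1
  set c := γ' 0 i₀
  have he : ∀ j, e j ≠ 0 → d j = q := fun j hj => by
    obtain rfl : j = i₀ := by_contra fun h => hj (Pi.single_eq_of_ne h 1)
    exact hi₀
  have hce : c • e ≠ 0 := smul_ne_zero hc (Pi.single_ne_zero_iff.2 one_ne_zero)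
  have hIcc : Icc (-1 : ℝ) 1 ∈ 𝓝 0 := Icc_mem_nhds (by norm_num) (by norm_num)
  have h0 : (0 : ℝ) ∈ Icc (-1 : ℝ) 1 := mem_of_mem_nhds hIcc
  have hshrink : ∀ δ > 0, ∀ᶠ r in 𝓝[>] 0,
      {t | t ∈ Icc (-1 : ℝ) 1 ∧ ρ 0 (γ t) < r} ⊆ Metric.ball 0 δ :=
    fun δ => isCompact_Icc.eventually_sublevel_subset_ball
      (hNc.comp_continuousOn fun t ht => (hderiv t ht).continuousWithinAt)
      fun t ht ht0 => hNpos _ fun h => ht0 (hinj ht h0 (h.trans hγ0.symm))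
  obtain ⟨hright, hleft⟩ :=
    hN.tendsto_pow_div_of_hasDerivWithinAt_of_mem_nhds hNc hq0 hi₀ hIcc hγ0 (hderiv 0 h0) hlito
  have hvol := tendsto_measureReal_sublevel_div_pow_of_mem_nhds hIcc measure_Icc_lt_top.ne
    (fun t _ => hN0 _) hq0 hshrink (pow_pos (hNpos _ hce) q)
    (pow_pos (hNpos _ (neg_ne_zero.2 hce)) q) hright hleft
  rw [← measureReal_def, hN.measureReal_setOf_smul_lt_one hN0 hq0 he hc (hNpos _ hce)
      (hNpos _ (neg_ne_zero.2 hce)),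
    show ∀ x V : ℝ, x / |c| * (|c| * V) = x * V from fun x V => by field_simp [abs_ne_zero.2 hc]]
  have hνc : ContinuousOn (fun t => √(∑ j, γ' t j ^ 2)) (Icc (-1 : ℝ) 1) := by fun_prop
  exact tendsto_setIntegral_div_of_tendsto_measureReal_div (hνc 0 h0) (fun _ _ ht => ht.1)
    (fun _ => hνc.integrableOn_Icc.mono_set fun _ ht => ht.1)
    (fun _ => (measure_mono fun _ ht => ht.1).trans_lt measure_Icc_lt_top)
    hshrink hvol

/-- Coordinate form of Theorem 1.3 (blow-up of the measure at a point of maximum degree):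
for a `C¹` injective curve `γ : [-1,1] → ℝⁿ` through the origin whose components satisfy the
blow-up estimates `γ_i(t) = o(|t|^{d i / q})` for `i ≠ i₀` and with `c = γ'_{i₀}(0) ≠ 0`,
the ratio `r^{-q} ∫_{{ρ(0,γ(t)) < r}} ‖γ'(t)‖ dt` converges, as `r → 0⁺`, to
`(‖γ'(0)‖/|c|) · L¹({s : ρ(0, s e_{i₀}) < 1})`. -/
theorem blowup_measure_limit_at_max_degree_point
    (n : ℕ) (hn : 1 ≤ n) (d : Fin n → ℕ) (hd1 : ∀ j, 1 ≤ d j)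
    (q : ℕ) (hq : 1 ≤ q) (i₀ : Fin n) (hi₀ : d i₀ = q)
    -- `ρ` is a metric on `ℝⁿ` inducing the Euclidean topology
    (ρ : (Fin n → ℝ) → (Fin n → ℝ) → ℝ)
    (hρsymm : ∀ x y, ρ x y = ρ y x)
    (hρtri : ∀ x y z, ρ x z ≤ ρ x y + ρ y z)
    (hρeq : ∀ x y, ρ x y = 0 ↔ x = y)
    (hρtop : ∀ x : Fin n → ℝ, (𝓝 x).HasBasis (fun ε : ℝ => 0 < ε) fun ε => {y | ρ x y < ε})
    -- homogeneity of `ρ` with respect to the anisotropic dilations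
    (hρhom : ∀ r : ℝ, 0 < r → ∀ x : Fin n → ℝ,
      ρ 0 (fun j => r ^ (d j) * x j) = r * ρ 0 x)
    -- `γ : [-1,1] → ℝⁿ` is a `C¹` injective curve with derivative `γ'`
    (γ γ' : ℝ → Fin n → ℝ)
    (hderiv : ∀ t ∈ Set.Icc (-1 : ℝ) 1, HasDerivWithinAt γ (γ' t) (Set.Icc (-1 : ℝ) 1) t)
    (hγ'c : ContinuousOn γ' (Set.Icc (-1 : ℝ) 1))
    (hinj : Set.InjOn γ (Set.Icc (-1 : ℝ) 1))
    (hγ0 : γ 0 = 0)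
    (hlito : ∀ i, i ≠ i₀ →
      (fun t : ℝ => γ t i) =o[𝓝 0] fun t : ℝ => |t| ^ ((d i : ℝ) / (q : ℝ)))
    (hc : γ' 0 i₀ ≠ 0) :
    Tendsto
      (fun r : ℝ =>
        (∫ t in {t : ℝ | t ∈ Set.Icc (-1 : ℝ) 1 ∧ ρ 0 (γ t) < r},
          Real.sqrt (∑ j, (γ' t j) ^ 2)) / r ^ q)
      (𝓝[>] 0)
      (𝓝 ((Real.sqrt (∑ j, (γ' 0 j) ^ 2) / |γ' 0 i₀|) *
        (volume {s : ℝ | ρ 0 (s • (Pi.single i₀ 1 : Fin n → ℝ)) < 1}).toReal)) :=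
  blowup_measure_limit_at_max_degree_point_general n d q hq i₀ hi₀ ρ hρsymm hρtri hρeq hρtop hρhom γ
    γ' hderiv hγ'c hinj hγ0 hlito hc
end
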